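/- Let Π = (P, 𝓛) be a finite projective plane of order n and let m ≥ 1 be a natural number with gcd(n, m) > 1. Then Π is pseudomagic over ℤ/mℤ, i.e., there exists a non-constant line-invariant function v : P → ℤ/mℤ. -/

import Mathlib

open Configuration

/-- The sum of `v` over the points of the line `l`. -/
noncomputable def lineSum {P L G : Type*} [Membership P L] [AddCommMonoid G]
    (v : P → G) (l : L) : G :=
  ∑ᶠ x ∈ {x : P | x ∈ l}, v x

/-- `v : P → G` is line invariant if its sum along every line of `L` is the same. -/
def LineInvariant (P L : Type*) {G : Type*} [Membership P L] [AddCommMonoid G]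
    (v : P → G) : Prop :=
  ∀ l l' : L, lineSum v l = lineSum v l'

/-!
Pick a line `l₀` and an element `c ≠ 0` of `ℤ/mℤ` with `n • c = 0`; one exists because, by Cauchy's
theorem, `ℤ/mℤ` has an element of order `p` for every prime `p ∣ gcd(n, m)`. Let `v` be `c` on
`l₀` and `0` elsewhere. Every other line meets `l₀` in exactly one point, so its sum is `c`, and
`l₀` itself has `n + 1` points, so its sum is `(n + 1) • c = c`. Since some point is off `l₀`,
`v` is not constant.
-/

theorem lineSum_indicator {P L G : Type*} [Membership P L] [AddCommMonoid G] [Finite P]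
    (l₀ l : L) (c : G) :
    lineSum ({x : P | x ∈ l₀}.indicator fun _ => c) l =
      Nat.card {x : P // x ∈ l ∧ x ∈ l₀} • c := by
  classical
  have := Fintype.ofFinite P
  rw [lineSum, ← Finset.coe_filter_univ, finsum_mem_coe_finset,
    Finset.sum_indicator_eq_sum_filter]
  simp [Finset.filter_filter, Nat.card_eq_fintype_card, Fintype.card_subtype]

theorem ZMod.exists_ne_zero_nsmul_eq_zero_of_one_lt_gcd {m n : ℕ} [NeZero m]
    (h : 1 < Nat.gcd n m) : ∃ c : ZMod m, c ≠ 0 ∧ n • c = 0 := by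
  obtain ⟨p, hp, hpd⟩ := Nat.exists_prime_and_dvd h.ne'
  have : Fact p.Prime := ⟨hp⟩
  obtain ⟨c, hc⟩ := exists_prime_addOrderOf_dvd_card (G := ZMod m) p
    (by rw [ZMod.card]; exact hpd.trans (Nat.gcd_dvd_right n m))
  refine ⟨c, fun hc0 => hp.ne_one ?_, ?_⟩
  · rw [← hc, hc0, addOrderOf_zero]
  · rw [← addOrderOf_dvd_iff_nsmul_eq_zero, hc]
    exact hpd.trans (Nat.gcd_dvd_left n m)

namespace Configuration.ProjectivePlane

variable {P L : Type*} [Membership P L] [ProjectivePlane P L]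

theorem card_mem_and_mem_of_ne {l l₀ : L} (h : l ≠ l₀) :
    Nat.card {x : P // x ∈ l ∧ x ∈ l₀} = 1 := by
  rw [Nat.card_eq_one_iff_exists]
  refine ⟨⟨HasPoints.mkPoint h, HasPoints.mkPoint_ax h⟩, fun x => Subtype.ext ?_⟩
  exact (Nondegenerate.eq_or_eq x.2.1 (HasPoints.mkPoint_ax h).1 x.2.2
    (HasPoints.mkPoint_ax h).2).resolve_right h

theorem card_mem_and_mem_self [Finite P] [Finite L] (l : L) :
    Nat.card {x : P // x ∈ l ∧ x ∈ l} = order P L + 1 := by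
  simp only [and_self]
  exact pointCount_eq P l

theorem exists_mem_and_not_mem : ∃ l : L, ∃ p q : P, p ∈ l ∧ q ∉ l := by
  obtain ⟨p₁, p₂, -, -, l, -, h₁, -, -, h₂, -⟩ := exists_config (P := P) (L := L)
  exact ⟨l, p₂, p₁, h₂, h₁⟩

theorem lineSum_indicator_eq [Finite P] [Finite L] {G : Type*} [AddCommMonoid G] {c : G}
    (hc : order P L • c = 0) (l₀ l : L) :
    lineSum ({x : P | x ∈ l₀}.indicator fun _ => c) l = c := by
  rw [lineSum_indicator]
  obtain rfl | h := eq_or_ne l l₀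
  · rw [card_mem_and_mem_self, add_smul, hc, zero_add, one_smul]
  · rw [card_mem_and_mem_of_ne h, one_smul]

theorem exists_lineInvariant_not_const [Finite P] [Finite L] {G : Type*} [AddCommMonoid G]
    {c : G} (hc0 : c ≠ 0) (hc : order P L • c = 0) :
    ∃ v : P → G, LineInvariant P L v ∧ ¬ ∀ a b : P, v a = v b := by
  obtain ⟨l₀, p, q, hp, hq⟩ := exists_mem_and_not_mem (P := P) (L := L)
  refine ⟨{x : P | x ∈ l₀}.indicator fun _ => c, fun l l' => ?_, fun h => hc0 ?_⟩
  · rw [lineSum_indicator_eq hc, lineSum_indicator_eq hc]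
  · have := h p q
    rwa [Set.indicator_of_mem (s := {x : P | x ∈ l₀}) hp,
      Set.indicator_of_notMem (s := {x : P | x ∈ l₀}) hq] at this

end Configuration.ProjectivePlane

theorem stmt_3 {P L : Type*} [Membership P L] [Fintype P] [Fintype L]
    [ProjectivePlane P L] {n : ℕ} (hn : ProjectivePlane.order P L = n)
    (m : ℕ) (hm : 1 ≤ m) (hgcd : 1 < Nat.gcd n m) :
    ∃ v : P → ZMod m, LineInvariant P L v ∧ ¬ ∀ a b : P, v a = v b := by
  have : NeZero m := ⟨by omega⟩
  obtain ⟨c, hc0, hc⟩ := ZMod.exists_ne_zero_nsmul_eq_zero_of_one_lt_gcd hgcd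
  exact ProjectivePlane.exists_lineInvariant_not_const hc0 (hn ▸ hc)
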